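/- For every pure two-qudit state ρ = |ψ⟩⟨ψ| on ℂ^d⊗ℂ^d (d ≥ 2), the geometric quantum discord satisfies D_g(|ψ⟩⟨ψ|) ≤ ((d−1)/(d(d+1)))·(d + C̃²) ≤ (d−1)/d, where C̃ = √(1 − ‖r₂‖²) is the normalized concurrence of |ψ⟩⟨ψ| and r₂ is the Bloch vector of the reduced state ρ₂ = tr₁ρ relative to any Bloch basis. -/

import Mathlib

open Matrix Finset
open scoped Kronecker ComplexOrder

noncomputable section

/-- A quantum state: a positive semidefinite (hence Hermitian) matrix of trace 1. -/
def IsState {n : Type*} [Fintype n] (ρ : Matrix n n ℂ) : Prop :=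
  ρ.PosSemidef ∧ ρ.trace = 1

/-- The pure state (rank-one projection) associated with a vector `ψ`. -/
def pureState {n : Type*} (ψ : n → ℂ) : Matrix n n ℂ :=
  Matrix.vecMulVec ψ (star ψ)

/-- A Bloch basis for `d × d` complex matrices: a family of nonzero traceless Hermitian
matrices with `tr[Υ k * Υ m] = 2 δ_{km}`. -/
def IsBlochBasis (d : ℕ) (Υ : Fin (d ^ 2 - 1) → Matrix (Fin d) (Fin d) ℂ) : Prop :=
  (∀ k, Υ k ≠ 0) ∧ (∀ k, (Υ k).IsHermitian) ∧ (∀ k, (Υ k).trace = 0) ∧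
    (∀ k m, (Υ k * Υ m).trace = if k = m then 2 else 0)

/-- The Bloch vector of a state `ρ` on `ℂ^d` relative to a Bloch basis `Υ`. -/
def blochVector {d : ℕ} (ρ : Matrix (Fin d) (Fin d) ℂ)
    (Υ : Fin (d ^ 2 - 1) → Matrix (Fin d) (Fin d) ℂ) : Fin (d ^ 2 - 1) → ℝ :=
  fun k => Real.sqrt ((d : ℝ) / (2 * ((d : ℝ) - 1))) * ((ρ * Υ k).trace).re

/-- Partial trace over the first tensor factor. -/
def ptrace1 {d₁ d₂ : ℕ} (ρ : Matrix (Fin d₁ × Fin d₂) (Fin d₁ × Fin d₂) ℂ) :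
    Matrix (Fin d₂) (Fin d₂) ℂ :=
  Matrix.of fun j j' => ∑ i, ρ (i, j) (i, j')

/-- Partial trace over the second tensor factor. -/
def ptrace2 {d₁ d₂ : ℕ} (ρ : Matrix (Fin d₁ × Fin d₂) (Fin d₁ × Fin d₂) ℂ) :
    Matrix (Fin d₁) (Fin d₁) ℂ :=
  Matrix.of fun i i' => ∑ j, ρ (i, j) (i', j)

/-- Partial transpose with respect to the second tensor factor. -/
def ptranspose2 {d₁ d₂ : ℕ} (ρ : Matrix (Fin d₁ × Fin d₂) (Fin d₁ × Fin d₂) ℂ) :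
    Matrix (Fin d₁ × Fin d₂) (Fin d₁ × Fin d₂) ℂ :=
  Matrix.of fun p q => ρ (p.1, q.2) (q.1, p.2)

/-- The correlation matrix of a two-qudit state, `T^{ij} = tr[ρ (Υ₁ i ⊗ Υ₂ j)]`. -/
def corrMatrix {d₁ d₂ : ℕ} (ρ : Matrix (Fin d₁ × Fin d₂) (Fin d₁ × Fin d₂) ℂ)
    (Υ₁ : Fin (d₁ ^ 2 - 1) → Matrix (Fin d₁) (Fin d₁) ℂ)
    (Υ₂ : Fin (d₂ ^ 2 - 1) → Matrix (Fin d₂) (Fin d₂) ℂ) :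
    Matrix (Fin (d₁ ^ 2 - 1)) (Fin (d₂ ^ 2 - 1)) ℝ :=
  Matrix.of fun i j => ((ρ * (Υ₁ i ⊗ₖ Υ₂ j)).trace).re

/-- A quantum-classical state `χ = Σ_k α_k σ_k ⊗ |k⟩⟨k|`. -/
def IsQCState {d₁ d₂ : ℕ} (χ : Matrix (Fin d₁ × Fin d₂) (Fin d₁ × Fin d₂) ℂ) : Prop :=
  ∃ (α : Fin d₂ → ℝ) (σ : Fin d₂ → Matrix (Fin d₁) (Fin d₁) ℂ) (e : Fin d₂ → Fin d₂ → ℂ),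
    (∀ k, 0 ≤ α k) ∧ (∑ k, α k = 1) ∧ (∀ k, IsState (σ k)) ∧
    (∀ k l, ∑ i, star (e k i) * e l i = if k = l then (1 : ℂ) else 0) ∧
    χ = ∑ k, (α k : ℂ) • (σ k ⊗ₖ pureState (e k))

/-- The geometric quantum discord (with the Hilbert–Schmidt distance):
`D_g(ρ) = min over quantum-classical χ of tr[(ρ - χ)²]`. -/
def Dg {d₁ d₂ : ℕ} (ρ : Matrix (Fin d₁ × Fin d₂) (Fin d₁ × Fin d₂) ℂ) : ℝ :=
  sInf {x : ℝ | ∃ χ, IsQCState χ ∧ x = (((ρ - χ) * (ρ - χ)).trace).re}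

/-- `η` lists the eigenvalues of the real matrix `G` in decreasing order with algebraic
multiplicities: `η` is antitone and the characteristic polynomial of `G` splits as
`∏ (X - η n)`. -/
def IsEigList {N : ℕ} (G : Matrix (Fin N) (Fin N) ℝ) (η : Fin N → ℝ) : Prop :=
  Antitone η ∧ G.charpoly = ∏ n, (Polynomial.X - Polynomial.C (η n))

/-- A simplex frame in `ℝ^N`: `d` unit vectors summing to zero with pairwise scalar
products `-1/(d-1)`. -/
def IsSimplexFrame {N : ℕ} (d : ℕ) (y : Fin d → Fin N → ℝ) : Prop :=
  (∀ k, ∑ i, y k i ^ 2 = 1) ∧ (∀ i, ∑ k, y k i = 0) ∧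
    (∀ j k, j ≠ k → ∑ i, y j i * y k i = -1 / ((d : ℝ) - 1))

/-- The operator `Π_{Ω_y} = ((d-1)/d) Σ_k y_k y_kᵀ` associated with a simplex frame. -/
def simplexProj {N : ℕ} (d : ℕ) (y : Fin d → Fin N → ℝ) : Matrix (Fin N) (Fin N) ℝ :=
  (((d : ℝ) - 1) / d) • ∑ k, Matrix.vecMulVec (y k) (y k)

/-- The matrix `G(ρ) = ((d₂-1)/(d₁ d₂)) r₂ r₂ᵀ + (1/4) T_ρᵀ T_ρ`. -/
def Gmat {d₁ d₂ : ℕ} (ρ : Matrix (Fin d₁ × Fin d₂) (Fin d₁ × Fin d₂) ℂ)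
    (Υ₁ : Fin (d₁ ^ 2 - 1) → Matrix (Fin d₁) (Fin d₁) ℂ)
    (Υ₂ : Fin (d₂ ^ 2 - 1) → Matrix (Fin d₂) (Fin d₂) ℂ) :
    Matrix (Fin (d₂ ^ 2 - 1)) (Fin (d₂ ^ 2 - 1)) ℝ :=
  (((d₂ : ℝ) - 1) / (d₁ * d₂)) •
      Matrix.vecMulVec (blochVector (ptrace1 ρ) Υ₂) (blochVector (ptrace1 ρ) Υ₂)
    + (4 : ℝ)⁻¹ • ((corrMatrix ρ Υ₁ Υ₂)ᵀ * corrMatrix ρ Υ₁ Υ₂)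

/-- The trace norm (sum of singular values) of a complex square matrix. -/
def traceNorm {n : Type*} [Fintype n] [DecidableEq n] (X : Matrix n n ℂ) : ℝ :=
  ∑ i, Real.sqrt ((Matrix.posSemidef_conjTranspose_mul_self X).1.eigenvalues i)

/-- The negativity `N_ρ = (‖ρ^{T₂}‖₁ - 1)/2`. -/
def negativity {d₁ d₂ : ℕ} (ρ : Matrix (Fin d₁ × Fin d₂) (Fin d₁ × Fin d₂) ℂ) : ℝ :=
  (traceNorm (ptranspose2 ρ) - 1) / 2

/-- The concurrence of a pure two-qudit state, `C = √(2 (1 - tr[ρ₁²]))`, `ρ₁ = tr₂ ρ`. -/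
def concurrence {d₁ d₂ : ℕ} (ρ : Matrix (Fin d₁ × Fin d₂) (Fin d₁ × Fin d₂) ℂ) : ℝ :=
  Real.sqrt (2 * (1 - ((ptrace2 ρ * ptrace2 ρ).trace).re))

end

/-!
Measuring the second qudit of `|ψ⟩` in an eigenbasis `(e_k)` of `ρ₂` gives the
quantum-classical state `χ = Σ_k |φ_k ⊗ e_k⟩⟨φ_k ⊗ e_k|` with `φ_k = (1 ⊗ ⟨e_k|) ψ`. The
vectors `φ_k ⊗ e_k` are orthogonal with `‖φ_k ⊗ e_k‖² = ⟨ψ, φ_k ⊗ e_k⟩ = λ_k`, the eigenvalues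
of `ρ₂`, so `tr[(ρ - χ)²] = 1 - Σ λ_k² = 1 - tr ρ₂²`. Bessel's inequality in the
Hilbert–Schmidt space turns this into a bound by the Bloch vector:
`(d - 1) ‖r₂‖² ≤ d tr ρ₂² - 1`, and `1 - ‖r₂‖² ≤ C̃² ≤ 1` finishes the estimate.
-/

section PureState

variable {m n : Type*}

lemma pureState_isHermitian [Fintype n] (v : n → ℂ) : (pureState v).IsHermitian :=
  (posSemidef_vecMulVec_self_star v).isHermitian

lemma trace_pureState [Fintype n] (v : n → ℂ) : (pureState v).trace = star v ⬝ᵥ v := by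
  rw [pureState, trace_vecMulVec, dotProduct_comm]

lemma isState_pureState [Fintype n] {v : n → ℂ} (hv : star v ⬝ᵥ v = 1) : IsState (pureState v) :=
  ⟨posSemidef_vecMulVec_self_star v, (trace_pureState v).trans hv⟩

lemma trace_pureState_mul_pureState [Fintype n] (a b : n → ℂ) :
    (pureState a * pureState b).trace = (star a ⬝ᵥ b) * (star b ⬝ᵥ a) := by
  simp only [Matrix.trace, Matrix.diag, mul_apply, pureState, Matrix.vecMulVec_apply, dotProduct,
    Pi.star_apply, Finset.sum_mul_sum]
  rw [Finset.sum_comm]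
  exact Finset.sum_congr rfl fun _ _ => Finset.sum_congr rfl fun _ _ => by ring

def vecKronecker (a : m → ℂ) (b : n → ℂ) : m × n → ℂ := fun p => a p.1 * b p.2

lemma pureState_vecKronecker (a : m → ℂ) (b : n → ℂ) :
    pureState (vecKronecker a b) = pureState a ⊗ₖ pureState b := by
  ext ⟨i, j⟩ ⟨i', j'⟩
  simp only [pureState, vecKronecker, vecMulVec_apply, Pi.star_apply, star_mul',
    kroneckerMap_apply]
  ring

lemma star_vecKronecker_dotProduct [Fintype m] [Fintype n] (a c : m → ℂ) (b e : n → ℂ) :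
    star (vecKronecker a b) ⬝ᵥ vecKronecker c e = (star a ⬝ᵥ c) * (star b ⬝ᵥ e) := by
  simp only [dotProduct, vecKronecker, Pi.star_apply, star_mul', Fintype.sum_prod_type,
    Finset.sum_mul_sum]
  exact Finset.sum_congr rfl fun _ _ => Finset.sum_congr rfl fun _ _ => by ring

end PureState

lemma re_trace_mul_self_nonneg {n : Type*} [Fintype n] {A : Matrix n n ℂ}
    (hA : A.IsHermitian) : 0 ≤ ((A * A).trace).re := by
  have h := (posSemidef_conjTranspose_mul_self A).trace_nonneg
  rw [hA.eq] at h
  exact (Complex.nonneg_iff.mp h).1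

lemma Matrix.IsHermitian.trace_mul_self {𝕜 n : Type*} [RCLike 𝕜] [Fintype n] [DecidableEq n]
    {A : Matrix n n 𝕜} (hA : A.IsHermitian) :
    (A * A).trace = ∑ i, (hA.eigenvalues i : 𝕜) ^ 2 := by
  conv_lhs => rw [hA.spectral_theorem, ← map_mul, Unitary.conjStarAlgAut_apply, trace_mul_cycle,
    Unitary.coe_star_mul_self, one_mul, diagonal_mul_diagonal, trace_diagonal]
  simp [sq]

section PartialTrace

variable {d₁ d₂ : ℕ}

lemma Matrix.IsHermitian.ptrace1 {ρ : Matrix (Fin d₁ × Fin d₂) (Fin d₁ × Fin d₂) ℂ}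
    (hρ : ρ.IsHermitian) : (ptrace1 ρ).IsHermitian := by
  ext j j'
  simp only [conjTranspose_apply, _root_.ptrace1, of_apply, star_sum, hρ.apply]

lemma trace_ptrace1 (ρ : Matrix (Fin d₁ × Fin d₂) (Fin d₁ × Fin d₂) ℂ) :
    (ptrace1 ρ).trace = ρ.trace := by
  simp only [Matrix.trace, Matrix.diag, ptrace1, of_apply, Fintype.sum_prod_type]
  exact Finset.sum_comm

/-- `contractSnd ψ a` is the vector `(1 ⊗ ⟨a|) ψ`. -/
def contractSnd {m n : Type*} [Fintype n] (ψ : m × n → ℂ) (a : n → ℂ) : m → ℂ :=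
  fun i => ∑ j, ψ (i, j) * star (a j)

lemma star_contractSnd_dotProduct_contractSnd (ψ : Fin d₁ × Fin d₂ → ℂ) (a b : Fin d₂ → ℂ) :
    star (contractSnd ψ a) ⬝ᵥ contractSnd ψ b = star b ⬝ᵥ (ptrace1 (pureState ψ) *ᵥ a) := by
  simp only [dotProduct, contractSnd, mulVec, ptrace1, pureState, Matrix.vecMulVec_apply,
    of_apply, Pi.star_apply, star_sum, star_mul', star_star, Finset.sum_mul, Finset.mul_sum]
  rw [Finset.sum_comm]
  refine Finset.sum_congr rfl fun j _ => ?_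
  rw [Finset.sum_comm]
  refine Finset.sum_congr rfl fun j' _ => ?_
  exact Finset.sum_congr rfl fun i _ => by ring

lemma star_dotProduct_vecKronecker_contractSnd (ψ : Fin d₁ × Fin d₂ → ℂ) (a : Fin d₂ → ℂ) :
    star ψ ⬝ᵥ vecKronecker (contractSnd ψ a) a = star (contractSnd ψ a) ⬝ᵥ contractSnd ψ a := by
  simp only [dotProduct, vecKronecker, contractSnd, Pi.star_apply, star_sum, star_mul',
    star_star, Fintype.sum_prod_type, Finset.sum_mul, Finset.mul_sum]
  exact Finset.sum_congr rfl fun i _ => Finset.sum_comm.trans <|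
    Finset.sum_congr rfl fun j _ => Finset.sum_congr rfl fun j' _ => by ring

end PartialTrace

lemma IsQCState.posSemidef {d₁ d₂ : ℕ} {χ : Matrix (Fin d₁ × Fin d₂) (Fin d₁ × Fin d₂) ℂ}
    (hχ : IsQCState χ) : χ.PosSemidef := by
  obtain ⟨α, σ, e, hα, -, hσ, -, rfl⟩ := hχ
  refine posSemidef_sum _ fun k _ => ?_
  exact ((hσ k).1.kronecker (posSemidef_vecMulVec_self_star (e k))).smul
    (Complex.zero_le_real.mpr (hα k))

lemma Dg_le_of_isQCState {d₁ d₂ : ℕ} {ρ χ : Matrix (Fin d₁ × Fin d₂) (Fin d₁ × Fin d₂) ℂ}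
    (hρ : ρ.IsHermitian) (hχ : IsQCState χ) : Dg ρ ≤ (((ρ - χ) * (ρ - χ)).trace).re := by
  refine csInf_le ⟨0, ?_⟩ ⟨χ, hχ, rfl⟩
  rintro _ ⟨χ', hχ', rfl⟩
  exact re_trace_mul_self_nonneg (hρ.sub hχ'.posSemidef.isHermitian)

lemma isQCState_sum_pureState_vecKronecker {d₁ d₂ : ℕ} [NeZero d₁] (φ : Fin d₂ → Fin d₁ → ℂ)
    (e : Fin d₂ → Fin d₂ → ℂ) (α : Fin d₂ → ℝ) (hφ : ∀ k, star (φ k) ⬝ᵥ φ k = α k)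
    (hα : ∑ k, α k = 1) (he : ∀ k l, star (e k) ⬝ᵥ e l = if k = l then 1 else 0) :
    IsQCState (∑ k, pureState (vecKronecker (φ k) (e k))) := by
  classical
  have hα_nonneg (k : Fin d₂) : 0 ≤ α k := by
    have h := dotProduct_star_self_nonneg (φ k)
    rwa [hφ k, Complex.zero_le_real] at h
  -- when `α k = 0` the vector `φ k` vanishes and any state can stand in for `σ k`
  let σ (k : Fin d₂) : Matrix (Fin d₁) (Fin d₁) ℂ :=
    if α k = 0 then pureState (Pi.single 0 1) else ((α k)⁻¹ : ℂ) • pureState (φ k)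
  refine ⟨α, σ, e, hα_nonneg, hα, fun k => ?_, he, Finset.sum_congr rfl fun k _ => ?_⟩
  · by_cases h : α k = 0
    · simp only [σ, if_pos h]
      exact isState_pureState (by simp)
    · simp only [σ, if_neg h]
      refine ⟨(posSemidef_vecMulVec_self_star (φ k)).smul (by simpa using hα_nonneg k), ?_⟩
      rw [trace_smul, trace_pureState, hφ k, smul_eq_mul, inv_mul_cancel₀ (by exact_mod_cast h)]
  · rw [pureState_vecKronecker]
    by_cases h : α k = 0
    · have : φ k = 0 := dotProduct_star_self_eq_zero.mp (by simp [hφ k, h])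
      simp [this, h, pureState]
    · simp only [σ, if_neg h, smul_kronecker, smul_smul]
      rw [mul_inv_cancel₀ (by exact_mod_cast h), one_smul]

lemma trace_mul_self_pureState_sub_sum_pureState {n ι : Type*} [Fintype n] [Fintype ι]
    [DecidableEq ι] {ψ : n → ℂ} (hψ : star ψ ⬝ᵥ ψ = 1) (w : ι → n → ℂ) (c : ι → ℝ)
    (hw : ∀ k l, star (w k) ⬝ᵥ w l = if k = l then (c k : ℂ) else 0)
    (hψw : ∀ k, star ψ ⬝ᵥ w k = c k) :
    (((pureState ψ - ∑ k, pureState (w k)) * (pureState ψ - ∑ k, pureState (w k))).trace)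
      = 1 - ∑ k, (c k : ℂ) ^ 2 := by
  have hwψ (k : ι) : star (w k) ⬝ᵥ ψ = c k := by
    rw [star_dotProduct, hψw, Complex.star_def, Complex.conj_ofReal]
  have hψχ : (pureState ψ * ∑ k, pureState (w k)).trace = ∑ k, (c k : ℂ) ^ 2 := by
    simp only [Matrix.mul_sum, trace_sum, trace_pureState_mul_pureState, hψw, hwψ, sq]
  have hχχ : ((∑ k, pureState (w k)) * ∑ k, pureState (w k)).trace = ∑ k, (c k : ℂ) ^ 2 := by
    simp only [Matrix.sum_mul, Matrix.mul_sum, trace_sum, trace_pureState_mul_pureState, hw,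
      mul_ite, ite_mul, mul_zero, zero_mul, Finset.sum_ite_eq, Finset.mem_univ, if_true, sq]
  rw [sub_mul, mul_sub, mul_sub, trace_sub, trace_sub, trace_sub,
    trace_mul_comm (∑ k, pureState (w k)) (pureState ψ), hψχ, hχχ,
    trace_pureState_mul_pureState, hψ]
  ring

lemma Dg_pureState_le {d₁ d₂ : ℕ} [NeZero d₁] {ψ : Fin d₁ × Fin d₂ → ℂ}
    (hψ : star ψ ⬝ᵥ ψ = 1) :
    Dg (pureState ψ) ≤ 1 - ((ptrace1 (pureState ψ) * ptrace1 (pureState ψ)).trace).re := by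
  set P := ptrace1 (pureState ψ)
  have hP : P.IsHermitian := (pureState_isHermitian ψ).ptrace1
  set e : Fin d₂ → Fin d₂ → ℂ := fun k => ⇑(hP.eigenvectorBasis k)
  have he (k l : Fin d₂) : star (e k) ⬝ᵥ e l = if k = l then 1 else 0 := by
    rw [dotProduct_comm, ← EuclideanSpace.inner_eq_star_dotProduct]
    exact orthonormal_iff_ite.mp hP.eigenvectorBasis.orthonormal k l
  set φ : Fin d₂ → Fin d₁ → ℂ := fun k => contractSnd ψ (e k)
  have hφ (k l : Fin d₂) : star (φ k) ⬝ᵥ φ l = if k = l then (hP.eigenvalues k : ℂ) else 0 := by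
    rw [star_contractSnd_dotProduct_contractSnd, hP.mulVec_eigenvectorBasis, dotProduct_smul, he]
    by_cases h : k = l <;> simp [h, eq_comm]
  have htrP : ∑ k, hP.eigenvalues k = 1 := by
    have h := hP.trace_eq_sum_eigenvalues
    rw [trace_ptrace1, trace_pureState, hψ] at h
    rw [← Complex.ofReal_inj]
    simpa using h.symm
  refine (Dg_le_of_isQCState (pureState_isHermitian ψ)
    (isQCState_sum_pureState_vecKronecker φ e hP.eigenvalues (fun k => by simpa using hφ k k)
      htrP he)).trans_eq ?_
  rw [trace_mul_self_pureState_sub_sum_pureState hψ _ hP.eigenvalues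
    (fun k l => by rw [star_vecKronecker_dotProduct, hφ, he]; split_ifs <;> simp)
    (fun k => by rw [star_dotProduct_vecKronecker_contractSnd, hφ, if_pos rfl]),
    hP.trace_mul_self]
  simp

/-- Bessel's inequality for the orthonormal family `{1/√d} ∪ {Υ k/√2}` under the
Hilbert–Schmidt inner product. -/
lemma sum_sq_re_trace_mul_le_of_isBlochBasis {d : ℕ} {P : Matrix (Fin d) (Fin d) ℂ}
    (hP : P.IsHermitian) (htrP : P.trace = 1) {Υ : Fin (d ^ 2 - 1) → Matrix (Fin d) (Fin d) ℂ}
    (hΥ : IsBlochBasis d Υ) :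
    ∑ k, ((P * Υ k).trace.re) ^ 2 ≤ 2 * ((P * P).trace.re - 1 / d) := by
  obtain ⟨-, hΥh, hΥtr, hΥΥ⟩ := hΥ
  have hd : (d : ℝ) ≠ 0 := by
    rintro h
    obtain rfl : d = 0 := by exact_mod_cast h
    simp at htrP
  set t : Fin (d ^ 2 - 1) → ℝ := fun k => (P * Υ k).trace.re
  set Q := P - (d : ℝ)⁻¹ • (1 : Matrix (Fin d) (Fin d) ℂ) - ∑ k, (t k / 2) • Υ k
  have hQ : Q.IsHermitian :=
    (hP.sub (isHermitian_one.smul (IsSelfAdjoint.all _))).sub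
      (isSelfAdjoint_sum _ fun k _ => (hΥh k).smul (IsSelfAdjoint.all _))
  have hQmul (X : Matrix (Fin d) (Fin d) ℂ) : (Q * X).trace.re
      = (P * X).trace.re - (d : ℝ)⁻¹ * X.trace.re - ∑ k, t k / 2 * (Υ k * X).trace.re := by
    simp only [Q, sub_mul, Matrix.sum_mul, smul_mul, one_mul, trace_sub, trace_sum, trace_smul,
      Complex.sub_re, Complex.re_sum, Complex.real_smul, Complex.re_ofReal_mul]
  have hQ1 : Q.trace.re = 0 := by
    simpa [htrP, hΥtr, hd] using hQmul 1
  have hQΥ (k : Fin (d ^ 2 - 1)) : (Q * Υ k).trace.re = 0 := by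
    rw [hQmul, hΥtr]
    simp [hΥΥ, t, apply_ite Complex.re]
  have hQQ : (Q * Q).trace.re = (P * P).trace.re - 1 / d - (∑ k, t k ^ 2) / 2 := by
    have hΥQ (k : Fin (d ^ 2 - 1)) : (Υ k * Q).trace.re = 0 := by rw [trace_mul_comm, hQΥ]
    have hΥP (k : Fin (d ^ 2 - 1)) : (Υ k * P).trace.re = t k := by rw [trace_mul_comm]
    rw [hQmul Q, trace_mul_comm P Q, hQmul P, hQ1]
    simp only [hΥQ, hΥP, htrP, Complex.one_re, mul_zero, Finset.sum_const_zero, Finset.sum_div]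
    ring_nf
  have := re_trace_mul_self_nonneg hQ
  linarith

lemma sum_sq_blochVector_le {d : ℕ} (hd : 2 ≤ d) {P : Matrix (Fin d) (Fin d) ℂ}
    (hP : P.IsHermitian) (htrP : P.trace = 1) {Υ : Fin (d ^ 2 - 1) → Matrix (Fin d) (Fin d) ℂ}
    (hΥ : IsBlochBasis d Υ) :
    ((d : ℝ) - 1) * ∑ k, blochVector P Υ k ^ 2 ≤ d * (P * P).trace.re - 1 := by
  have hd' : (2 : ℝ) ≤ d := by exact_mod_cast hd
  have hd1 : (d : ℝ) - 1 ≠ 0 := by linarith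
  have hsq : ∑ k, blochVector P Υ k ^ 2
      = d / (2 * (d - 1)) * ∑ k, ((P * Υ k).trace.re) ^ 2 := by
    have hc : 0 ≤ (d : ℝ) / (2 * (d - 1)) := div_nonneg (by linarith) (by linarith)
    simp only [blochVector, mul_pow, Real.sq_sqrt hc, Finset.mul_sum]
  have hbessel := sum_sq_re_trace_mul_le_of_isBlochBasis hP htrP hΥ
  calc ((d : ℝ) - 1) * ∑ k, blochVector P Υ k ^ 2
      = d / 2 * ∑ k, ((P * Υ k).trace.re) ^ 2 := by
        rw [hsq]
        field_simp
    _ ≤ d / 2 * (2 * ((P * P).trace.re - 1 / d)) := by gcongr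
    _ = d * (P * P).trace.re - 1 := by field_simp

lemma one_sub_le_mul_add_sqrt_sq {d x S : ℝ} (hd : 1 ≤ d) (hx : 0 ≤ x)
    (hxS : (d - 1) * x ≤ d * S - 1) :
    1 - S ≤ (d - 1) / (d * (d + 1)) * (d + Real.sqrt (1 - x) ^ 2) := by
  have hS : 1 ≤ d * S := by nlinarith [mul_nonneg (by linarith : 0 ≤ d - 1) hx]
  have hC : 1 - x ≤ Real.sqrt (1 - x) ^ 2 := Real.sq_sqrt' (x := 1 - x) ▸ le_max_left _ _
  have hpos : 0 < d * (d + 1) := by positivity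
  calc 1 - S ≤ (d - 1) / (d * (d + 1)) * (d + (1 - x)) := by
        rw [div_mul_eq_mul_div, le_div_iff₀ hpos]
        nlinarith [mul_le_mul_of_nonneg_left hS (by linarith : 0 ≤ d)]
    _ ≤ _ := mul_le_mul_of_nonneg_left (by linarith) (div_nonneg (by linarith) hpos.le)

lemma mul_add_sqrt_sq_le {d x : ℝ} (hd : 1 ≤ d) (hx : 0 ≤ x) :
    (d - 1) / (d * (d + 1)) * (d + Real.sqrt (1 - x) ^ 2) ≤ (d - 1) / d := by
  have hC : Real.sqrt (1 - x) ^ 2 ≤ 1 :=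
    Real.sq_sqrt' (x := 1 - x) ▸ max_le (by linarith) zero_le_one
  rw [div_mul_eq_mul_div, div_le_div_iff₀ (by positivity) (by positivity)]
  nlinarith [mul_le_mul_of_nonneg_left hC (by nlinarith : 0 ≤ (d - 1) * d)]

/-- for every pure two-qudit state `|ψ⟩⟨ψ|` on `ℂ^d⊗ℂ^d`,
`D_g(|ψ⟩⟨ψ|) ≤ ((d-1)/(d(d+1)))(d + C̃²) ≤ (d-1)/d`, where `C̃ = √(1-‖r₂‖²)` is the
normalized concurrence. -/
theorem stmt9 {d : ℕ} (hd : 2 ≤ d) (ψ : Fin d × Fin d → ℂ)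
    (hψ : ∑ i, Complex.normSq (ψ i) = 1)
    (Υ₂ : Fin (d ^ 2 - 1) → Matrix (Fin d) (Fin d) ℂ) (hΥ₂ : IsBlochBasis d Υ₂) :
    Dg (pureState ψ) ≤ ((d : ℝ) - 1) / (d * ((d : ℝ) + 1)) *
        ((d : ℝ) +
          Real.sqrt (1 - ∑ i, blochVector (ptrace1 (pureState ψ)) Υ₂ i ^ 2) ^ 2) ∧
    ((d : ℝ) - 1) / (d * ((d : ℝ) + 1)) *
        ((d : ℝ) +
          Real.sqrt (1 - ∑ i, blochVector (ptrace1 (pureState ψ)) Υ₂ i ^ 2) ^ 2)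
      ≤ ((d : ℝ) - 1) / d := by
  have : NeZero d := ⟨by omega⟩
  have hψ' : star ψ ⬝ᵥ ψ = 1 := by
    simp only [dotProduct, Pi.star_apply, Complex.star_def, ← Complex.normSq_eq_conj_mul_self]
    exact_mod_cast hψ
  have hP : (ptrace1 (pureState ψ)).IsHermitian := (pureState_isHermitian ψ).ptrace1
  have htrP : (ptrace1 (pureState ψ)).trace = 1 := by
    rw [trace_ptrace1, trace_pureState, hψ']
  have hx : 0 ≤ ∑ i, blochVector (ptrace1 (pureState ψ)) Υ₂ i ^ 2 :=
    Finset.sum_nonneg fun i _ => sq_nonneg _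
  have hd1 : (1 : ℝ) ≤ d := by exact_mod_cast one_le_two.trans hd
  exact ⟨(Dg_pureState_le hψ').trans <|
      one_sub_le_mul_add_sqrt_sq hd1 hx (sum_sq_blochVector_le hd hP htrP hΥ₂),
    mul_add_sqrt_sq_le hd1 hx⟩
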